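/- arXiv:2103.10871 — 2 statements merged into one kernel-verified Lean document; each statement's English description precedes it below -/
import Mathlib

section
/- The graph H_6 is 4-χρ-vertex-critical; that is, χρ(H_6) = 4 and χρ(H_6 − v) < 4 for every vertex v of H_6. -/
open SimpleGraph

/-- A `k`-packing coloring of `G`: colors in `{1,…,k}` and distinct vertices of equal color `i`
are at (extended, shortest-path) distance greater than `i`. -/
def IsPackingColoring {V : Type*} (G : SimpleGraph V) (k : ℕ) (c : V → ℕ) : Prop :=
  (∀ v, 1 ≤ c v ∧ c v ≤ k) ∧
    ∀ u v : V, u ≠ v → c u = c v → (c u : ℕ∞) < G.edist u v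

/-- The packing chromatic number of `G`: the least `k` admitting a `k`-packing coloring. -/
noncomputable def packingChromaticNumber {V : Type*} (G : SimpleGraph V) : ℕ :=
  sInf {k | ∃ c : V → ℕ, IsPackingColoring G k c}

/-- `G` is `4`-`χρ`-vertex-critical: `χρ(G) = 4` and deleting any vertex drops `χρ` below `4`. -/
def FourVertexCritical {V : Type*} (G : SimpleGraph V) : Prop :=
  packingChromaticNumber G = 4 ∧
    ∀ v : V, packingChromaticNumber (G.induce ({v}ᶜ : Set V)) < 4

/-- `G` contains a (not necessarily induced) subgraph isomorphic to `H`. -/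
def HasCopy {W V : Type*} (H : SimpleGraph W) (G : SimpleGraph V) : Prop :=
  ∃ f : H →g G, Function.Injective f

/-- The cycle on `n` vertices (for `n ≥ 3`). -/
def CycGraph (n : ℕ) : SimpleGraph (Fin n) :=
  SimpleGraph.fromRel (fun i j => (i.val + 1) % n = j.val)

/-- `H₆`: vertices `a=0, b=1, c=2, d=3, e=4, f=5`; edges `ab, be, ed, da, ac, ce, bf`. -/
def H6graph : SimpleGraph (Fin 6) :=
  SimpleGraph.fromRel (fun i j =>
    (i.val = 0 ∧ j.val = 1) ∨ (i.val = 1 ∧ j.val = 4) ∨ (i.val = 4 ∧ j.val = 3) ∨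
      (i.val = 3 ∧ j.val = 0) ∨ (i.val = 0 ∧ j.val = 2) ∨ (i.val = 2 ∧ j.val = 4) ∨
      (i.val = 1 ∧ j.val = 5))

instance : DecidableRel H6graph.Adj := fun i j =>
  decidable_of_iff _ (SimpleGraph.fromRel_adj _ i j).symm

lemma one_lt_edist {V : Type*} (G : SimpleGraph V) {u v : V} (hne : u ≠ v)
    (hadj : ¬ G.Adj u v) : 1 < G.edist u v := by
  have h0 : G.edist u v ≠ 0 := by simp [edist_eq_zero_iff, hne]
  have h1 : G.edist u v ≠ 1 := by simp [edist_eq_one_iff_adj, hadj]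
  exact lt_of_le_of_ne (Order.one_le_iff_pos.mpr (pos_iff_ne_zero.mpr h0)) (Ne.symm h1)

lemma walk1 {i j : Fin 6} (h1 : H6graph.Adj i j) : H6graph.edist i j ≤ ((1 : ℕ) : ℕ∞) := by
  simpa using edist_le (Walk.cons h1 Walk.nil)

lemma walk2 {i j k : Fin 6} (h1 : H6graph.Adj i j) (h2 : H6graph.Adj j k) :
    H6graph.edist i k ≤ ((2 : ℕ) : ℕ∞) := by
  simpa using edist_le (Walk.cons h1 (Walk.cons h2 Walk.nil))

lemma walk3 {i j k l : Fin 6} (h1 : H6graph.Adj i j) (h2 : H6graph.Adj j k)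
    (h3 : H6graph.Adj k l) : H6graph.edist i l ≤ ((3 : ℕ) : ℕ∞) :=
  le_trans (edist_le (Walk.cons h1 (Walk.cons h2 (Walk.cons h3 Walk.nil)))) (by norm_num)

lemma aux0 {a : ℕ} (h : 1 ≤ a ∧ a ≤ 3) : a - 1 < 3 := by omega

lemma aux1 {a b : ℕ} (ha : 1 ≤ a) (hb : 1 ≤ b) (f : a = b → a < 1) : a - 1 ≠ b - 1 :=
  fun h => absurd (f (by omega)) (by omega)

lemma aux2 {a b : ℕ} (ha : 1 ≤ a) (hb : 1 ≤ b) (f : a = b → a < 2) :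
    a - 1 = b - 1 → a - 1 = 0 := by
  intro h
  have := f (by omega)
  omega

lemma aux3 {a b : ℕ} (ha : 1 ≤ a) (hb : 1 ≤ b) (f : a = b → a < 3) :
    a - 1 = b - 1 → a - 1 ≠ 2 := by
  intro h
  have := f (by omega)
  omega

set_option maxRecDepth 10000 in
lemma noThree (c : Fin 6 → ℕ) : ¬ IsPackingColoring H6graph 3 c := by
  rintro ⟨hb, h⟩
  have key : ∀ i j : Fin 6, i ≠ j → ∀ n : ℕ, H6graph.edist i j ≤ (n : ℕ∞) →
      c i = c j → c i < n := by
    intro i j hne n hd he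
    exact_mod_cast lt_of_lt_of_le (h i j hne he) hd
  have f01 := key 0 1 (by decide) 1 (walk1 (by decide))
  have f14 := key 1 4 (by decide) 1 (walk1 (by decide))
  have f34 := key 3 4 (by decide) 1 (walk1 (by decide))
  have f03 := key 0 3 (by decide) 1 (walk1 (by decide))
  have f02 := key 0 2 (by decide) 1 (walk1 (by decide))
  have f24 := key 2 4 (by decide) 1 (walk1 (by decide))
  have f15 := key 1 5 (by decide) 1 (walk1 (by decide))
  have f04 := key 0 4 (by decide) 2 (walk2 (i := 0) (j := 1) (by decide) (by decide))
  have f12 := key 1 2 (by decide) 2 (walk2 (i := 1) (j := 0) (by decide) (by decide))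
  have f13 := key 1 3 (by decide) 2 (walk2 (i := 1) (j := 0) (by decide) (by decide))
  have f23 := key 2 3 (by decide) 2 (walk2 (i := 2) (j := 0) (by decide) (by decide))
  have f05 := key 0 5 (by decide) 2 (walk2 (i := 0) (j := 1) (by decide) (by decide))
  have f45 := key 4 5 (by decide) 2 (walk2 (i := 4) (j := 1) (by decide) (by decide))
  have f25 := key 2 5 (by decide) 3 (walk3 (i := 2) (j := 0) (k := 1) (by decide) (by decide) (by decide))
  have f35 := key 3 5 (by decide) 3 (walk3 (i := 3) (j := 0) (k := 1) (by decide) (by decide) (by decide))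
  have b0 := hb 0; have b1 := hb 1; have b2 := hb 2
  have b3 := hb 3; have b4 := hb 4; have b5 := hb 5
  have main : ∀ x : Fin 6 → Fin 3,
      ¬((x 0).val ≠ (x 1).val ∧ (x 1).val ≠ (x 4).val ∧ (x 3).val ≠ (x 4).val ∧
      (x 0).val ≠ (x 3).val ∧ (x 0).val ≠ (x 2).val ∧ (x 2).val ≠ (x 4).val ∧
      (x 1).val ≠ (x 5).val ∧
      ((x 0).val = (x 4).val → (x 0).val = 0) ∧
      ((x 1).val = (x 2).val → (x 1).val = 0) ∧
      ((x 1).val = (x 3).val → (x 1).val = 0) ∧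
      ((x 2).val = (x 3).val → (x 2).val = 0) ∧
      ((x 0).val = (x 5).val → (x 0).val = 0) ∧
      ((x 4).val = (x 5).val → (x 4).val = 0) ∧
      ((x 2).val = (x 5).val → (x 2).val ≠ 2) ∧
      ((x 3).val = (x 5).val → (x 3).val ≠ 2)) := by decide
  exact main (fun i => ⟨c i - 1, aux0 (hb i)⟩)
    ⟨aux1 b0.1 b1.1 f01, aux1 b1.1 b4.1 f14, aux1 b3.1 b4.1 f34, aux1 b0.1 b3.1 f03,
    aux1 b0.1 b2.1 f02, aux1 b2.1 b4.1 f24, aux1 b1.1 b5.1 f15,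
    aux2 b0.1 b4.1 f04, aux2 b1.1 b2.1 f12, aux2 b1.1 b3.1 f13, aux2 b2.1 b3.1 f23,
    aux2 b0.1 b5.1 f05, aux2 b4.1 b5.1 f45, aux3 b2.1 b5.1 f25, aux3 b3.1 b5.1 f35⟩

lemma pack4 : IsPackingColoring H6graph 4 ![2, 4, 1, 1, 3, 1] := by
  constructor
  · decide
  · intro u v hne hc
    have hfact : ∀ i j : Fin 6, i ≠ j →
        (![2, 4, 1, 1, 3, 1] : Fin 6 → ℕ) i = ![2, 4, 1, 1, 3, 1] j →
        ![2, 4, 1, 1, 3, 1] i = 1 ∧ ¬ H6graph.Adj i j := by decide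
    obtain ⟨h1, hadj⟩ := hfact u v hne hc
    rw [h1]
    exact_mod_cast one_lt_edist _ hne hadj

lemma induced_ok (v : Fin 6) (f : Fin 6 → ℕ)
    (hb : ∀ i, 1 ≤ f i ∧ f i ≤ 3)
    (h1 : ∀ i j : Fin 6, i ≠ j → i ≠ v → j ≠ v → f i = f j →
      f i = 1 ∧ ¬ H6graph.Adj i j) :
    IsPackingColoring (H6graph.induce ({v}ᶜ : Set (Fin 6))) 3 (fun x => f x.val) := by
  refine ⟨fun x => hb x.val, fun x y hxy hc => ?_⟩
  have hxv : (x : Fin 6) ≠ v := x.2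
  have hyv : (y : Fin 6) ≠ v := y.2
  have hne : (x : Fin 6) ≠ (y : Fin 6) := fun h => hxy (Subtype.ext h)
  obtain ⟨he1, hadj⟩ := h1 x y hne hxv hyv hc
  have hadj' : ¬ (H6graph.induce ({v}ᶜ : Set (Fin 6))).Adj x y := by
    simpa [SimpleGraph.comap_adj] using hadj
  simp only at he1 ⊢
  rw [he1]
  exact_mod_cast one_lt_edist _ hxy hadj'

theorem H6_fourVertexCritical : FourVertexCritical H6graph := by
  constructor
  · apply le_antisymm
    · exact Nat.sInf_le ⟨_, pack4⟩
    · refine le_csInf ⟨4, _, pack4⟩ ?_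
      rintro k ⟨c, hc⟩
      by_contra hlt
      push_neg at hlt
      exact noThree c ⟨fun w => ⟨(hc.1 w).1, le_trans (hc.1 w).2 (by omega)⟩, hc.2⟩
  · intro v
    have : ∀ f : Fin 6 → ℕ, (∀ i, 1 ≤ f i ∧ f i ≤ 3) →
        (∀ i j : Fin 6, i ≠ j → i ≠ v → j ≠ v → f i = f j →
          f i = 1 ∧ ¬ H6graph.Adj i j) →
        packingChromaticNumber (H6graph.induce ({v}ᶜ : Set (Fin 6))) < 4 := by
      intro f hb h1
      have h3 : packingChromaticNumber (H6graph.induce ({v}ᶜ : Set (Fin 6))) ≤ 3 :=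
        Nat.sInf_le ⟨_, induced_ok v f hb h1⟩
      omega
    fin_cases v
    · exact this ![1, 2, 1, 1, 3, 1] (by decide) (by decide)
    · exact this ![1, 1, 2, 3, 1, 1] (by decide) (by decide)
    · exact this ![1, 2, 1, 3, 1, 1] (by decide) (by decide)
    · exact this ![1, 2, 3, 1, 1, 1] (by decide) (by decide)
    · exact this ![2, 1, 1, 1, 1, 3] (by decide) (by decide)
    · exact this ![2, 1, 1, 1, 3, 1] (by decide) (by decide)
end

section
/- Every graph in the family F_1 is 4-χρ-vertex-critical; that is, for every integer l ≥ 0 with l ≢ 3 (mod 4), the graph G obtained from two disjoint triangles by joining a vertex of one triangle to a vertex of the other triangle by a path with exactly l internal vertices satisfies χρ(G) = 4 and χρ(G − v) < 4 for every vertex v. -/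
open SimpleGraph

/-- A member of the family `𝓕₁`: two triangles `{0,1,2}` and `{l+3,l+4,l+5}` joined by a
path from `u = 2` to `v = l+3` with `l` internal vertices `3,…,l+2`. -/
def F1Graph (l : ℕ) : SimpleGraph (Fin (l + 6)) :=
  SimpleGraph.fromRel (fun i j =>
    j.val = i.val + 1 ∨ (i.val = 0 ∧ j.val = 2) ∨ (i.val = l + 3 ∧ j.val = l + 5))

/-- A member of the family `𝓕₂`: a triangle `{0,1,2}` joined by a path from `u = 2` to
`v = l+3` with `l` internal vertices `3,…,l+2`, where `v` is the middle vertex of the path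
`(l+4)-(l+3)-(l+5)`. -/
def F2Graph (l : ℕ) : SimpleGraph (Fin (l + 6)) :=
  SimpleGraph.fromRel (fun i j =>
    (j.val = i.val + 1 ∧ j.val ≤ l + 4) ∨ (i.val = 0 ∧ j.val = 2) ∨
      (i.val = l + 3 ∧ j.val = l + 5))

/-- A member of the family `𝓕₃`: `A` is the path `0-1-2-3` (plus the edge `0-3` if
`c4 = true`, making it a 4-cycle) with non-pendant vertex `u = 2`, joined by a path with `l`
internal vertices `4,…,l+3` to the vertex `v = l+4` of the triangle `{l+4,l+5,l+6}`. -/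
def F3Graph (c4 : Bool) (l : ℕ) : SimpleGraph (Fin (l + 7)) :=
  SimpleGraph.fromRel (fun i j =>
    (j.val = i.val + 1 ∧ i.val ≠ 3) ∨ (i.val = 2 ∧ j.val = 4) ∨
      (c4 = true ∧ i.val = 0 ∧ j.val = 3) ∨ (i.val = l + 4 ∧ j.val = l + 6))

/-- A member of the family `𝓕₄`: paths `u₁(0)-u(1)-u₂(l+5+l')` and
`z₁(l+4+l')-z(l+3+l')-z₂(l+7+l')`, an edge `v(l+2)-v₁(l+6+l')`, with `u` joined to `v` by a
path through internal vertices `y₁(2),…,y_l(l+1)` and `v` joined to `z` by a path through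
internal vertices `w₁(l+3),…,w_{l'}(l+2+l')`; if `e = 1` the extra edge `v₁ y_{l-1}` is
present, and if `e = 2` the extra edge `v₁ w₂` is present. -/
def F4Graph (l l' : ℕ) (e : Fin 3) : SimpleGraph (Fin (l + l' + 8)) :=
  SimpleGraph.fromRel (fun i j =>
    (j.val = i.val + 1 ∧ j.val ≤ l + 4 + l') ∨ (i.val = 1 ∧ j.val = l + 5 + l') ∨
      (i.val = l + 2 ∧ j.val = l + 6 + l') ∨ (i.val = l + 3 + l' ∧ j.val = l + 7 + l') ∨
      (e = 1 ∧ i.val = l ∧ j.val = l + 6 + l') ∨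
      (e = 2 ∧ i.val = l + 4 ∧ j.val = l + 6 + l'))

/-- A member of the family `𝓕₅`: `A` is the path `0-1-2-3` (plus edge `0-3` if `ac4 = true`)
with non-pendant vertex `u = 2`, `B` is the path `(l+5)-(l+4)-(l+6)-(l+7)` (plus edge
`(l+5)-(l+7)` if `bc4 = true`) with non-pendant vertex `v = l+4`, and `u` is joined to `v`
by a path with `l` internal vertices `4,…,l+3`. -/
def F5Graph (ac4 bc4 : Bool) (l : ℕ) : SimpleGraph (Fin (l + 8)) :=
  SimpleGraph.fromRel (fun i j =>
    (j.val = i.val + 1 ∧ i.val ≠ 3 ∧ i.val ≠ l + 5) ∨ (i.val = 2 ∧ j.val = 4) ∨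
      (i.val = l + 4 ∧ j.val = l + 6) ∨ (ac4 = true ∧ i.val = 0 ∧ j.val = 3) ∨
      (bc4 = true ∧ i.val = l + 5 ∧ j.val = l + 7))

/-!
All distances in `F1Graph l` are read off a single coordinate: sending the twins `0, 1` to
position `1`, the twins `l + 4, l + 5` to position `l + 4` and every other vertex to its own
index, two distinct vertices are adjacent iff their positions differ by at most one, so their
distance is the difference of positions (or `1` for twins).

In a `3`-packing coloring the triangle end forces the colors `3, 1, 2` on `2, 3, 4`, and from
there the colors along the path are forced to repeat `3, 1, 2, 1` with period four. By the
mirror symmetry `i ↦ l + 5 - i` the vertex `l + 3` must also get color `3`, which the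
periodic pattern allows only when `l ≡ 3 (mod 4)`. Recoloring the vertex `l + 5` of that
pattern by `4` gives a `4`-packing coloring. Deleting a twin leaves a graph whose pattern
coloring (read from the other end) is valid, and deleting any other vertex disconnects the
graph into two pieces that can be colored from their own ends.
-/

namespace SimpleGraph

variable {V W : Type*} {G : SimpleGraph V} {H : SimpleGraph W}

theorem Hom.edist_le (f : G →g H) (u v : V) : H.edist (f u) (f v) ≤ G.edist u v := by
  by_cases hr : G.Reachable u v
  · obtain ⟨w, hw⟩ := hr.exists_walk_length_eq_edist
    rw [← hw, ← Walk.length_map f]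
    exact SimpleGraph.edist_le _
  · exact edist_eq_top_of_not_reachable hr ▸ le_top

section Position

variable {p : V → ℕ}

theorem Walk.dist_le_length (hp : ∀ u v, G.Adj u v → Nat.dist (p u) (p v) ≤ 1) {u v : V}
    (w : G.Walk u v) : Nat.dist (p u) (p v) ≤ w.length := by
  induction w with
  | nil => simp
  | cons h w ih =>
    have := hp _ _ h
    rw [Walk.length_cons]
    unfold Nat.dist at *
    omega

theorem max_dist_le_edist (hp : ∀ u v, G.Adj u v → Nat.dist (p u) (p v) ≤ 1) {u v : V}
    (huv : u ≠ v) : max (Nat.dist (p u) (p v)) 1 ≤ G.edist u v := by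
  by_cases hr : G.Reachable u v
  · obtain ⟨w, hw⟩ := hr.exists_walk_length_eq_edist
    rw [← hw]
    have hlen : w.length ≠ 0 := fun h => huv (Walk.eq_of_length_eq_zero h)
    exact_mod_cast max_le (w.dist_le_length hp) (by omega)
  · rw [edist_eq_top_of_not_reachable hr]
    exact le_top

theorem edist_le_max_dist (hadj : ∀ u v, G.Adj u v ↔ u ≠ v ∧ Nat.dist (p u) (p v) ≤ 1)
    (hstep : ∀ u v, p u < p v → ∃ w, p w = p u + 1) {u v : V} (huv : u ≠ v) :
    G.edist u v ≤ max (Nat.dist (p u) (p v)) 1 := by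
  wlog h : p u ≤ p v generalizing u v
  · rw [edist_comm, Nat.dist_comm]
    exact this huv.symm (by omega)
  obtain ⟨n, hn⟩ : ∃ n, p v = p u + n := ⟨_, (Nat.add_sub_cancel' h).symm⟩
  rw [Nat.dist_eq_sub_of_le h, hn, Nat.add_sub_cancel_left]
  induction n using Nat.strong_induction_on generalizing u with
  | _ n ih =>
    by_cases hn1 : n ≤ 1
    · have : G.Adj u v := (hadj u v).2 ⟨huv, by unfold Nat.dist; omega⟩
      rw [edist_eq_one_iff_adj.2 this]
      exact_mod_cast le_max_right n 1
    obtain ⟨w, hw⟩ := hstep u v (by omega)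
    have huw : G.Adj u w := (hadj u w).2 ⟨fun h => by subst h; omega, by unfold Nat.dist; omega⟩
    have hwv := ih (n - 1) (by omega) (u := w) (fun h => by subst h; omega) (by omega) (by omega)
    calc G.edist u v ≤ G.edist u w + G.edist w v := G.edist_triangle
      _ ≤ 1 + (n - 1 : ℕ) := by
        rw [edist_eq_one_iff_adj.2 huw, max_eq_left (by omega : 1 ≤ n - 1)] at *
        gcongr
      _ = max n 1 := by
        rw [max_eq_left (by omega : 1 ≤ n)]
        norm_cast
        omega

theorem edist_eq_max_dist (hadj : ∀ u v, G.Adj u v ↔ u ≠ v ∧ Nat.dist (p u) (p v) ≤ 1)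
    (hstep : ∀ u v, p u < p v → ∃ w, p w = p u + 1) {u v : V} (huv : u ≠ v) :
    G.edist u v = max (Nat.dist (p u) (p v)) 1 :=
  (edist_le_max_dist hadj hstep huv).antisymm
    (max_dist_le_edist (fun a b hab => ((hadj a b).1 hab).2) huv)

theorem not_reachable_induce_compl (hp : ∀ u v, G.Adj u v → Nat.dist (p u) (p v) ≤ 1)
    {v : V} (hv : ∀ w, p w = p v → w = v) {a b : ({v}ᶜ : Set V)} (ha : p a < p v)
    (hb : p v < p b) : ¬ (G.induce {v}ᶜ).Reachable a b := by
  rintro ⟨w⟩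
  obtain ⟨d, -, hd1, hd2⟩ := w.exists_boundary_dart {x | p x < p v} ha (by simp; omega)
  have hadj : Nat.dist (p d.fst) (p d.snd) ≤ 1 := hp _ _ d.adj
  have hne : p d.snd ≠ p v := fun h => d.snd.2 (hv _ h)
  simp only [Set.mem_ofPred_eq, not_lt] at hd1 hd2
  unfold Nat.dist at hadj
  omega

end Position

end SimpleGraph

section Packing

variable {V : Type*} {G : SimpleGraph V} {k : ℕ} {c : V → ℕ}

theorem IsPackingColoring.mono (h : IsPackingColoring G k c) {k' : ℕ} (hk : k ≤ k') :
    IsPackingColoring G k' c :=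
  ⟨fun v => ⟨(h.1 v).1, (h.1 v).2.trans hk⟩, h.2⟩

theorem packingChromaticNumber_le (h : IsPackingColoring G k c) : packingChromaticNumber G ≤ k :=
  Nat.sInf_le ⟨c, h⟩

theorem packingChromaticNumber_eq_succ (h : ∃ c, IsPackingColoring G (k + 1) c)
    (h' : ¬ ∃ c, IsPackingColoring G k c) : packingChromaticNumber G = k + 1 := by
  obtain ⟨c, hc⟩ := h
  refine le_antisymm (packingChromaticNumber_le hc) (not_lt.1 fun hlt => h' ?_)
  obtain ⟨c', hc'⟩ := Nat.sInf_mem (s := {k | ∃ c, IsPackingColoring G k c}) ⟨_, c, hc⟩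
  exact ⟨c', hc'.mono (Nat.le_of_lt_succ hlt)⟩

theorem isPackingColoring_induce {s : Set V}
    (hbound : ∀ u ∈ s, 1 ≤ c u ∧ c u ≤ k)
    (hsep : ∀ u v : s, u ≠ v → c u = c v →
      (c u : ℕ∞) < G.edist u v ∨ ¬ (G.induce s).Reachable u v) :
    IsPackingColoring (G.induce s) k (fun u => c u) := by
  refine ⟨fun u => hbound u u.2, fun u v huv heq => ?_⟩
  rcases hsep u v huv heq with h | h
  · exact h.trans_le ((Embedding.induce s).toHom.edist_le u v)
  · rw [edist_eq_top_of_not_reachable h]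
    exact ENat.natCast_lt_top _

end Packing

namespace F1Graph

variable {l k : ℕ} {C : ℕ → ℕ}

def pos (l i : ℕ) : ℕ := min (max i 1) (l + 4)

theorem adj_iff {u v : Fin (l + 6)} :
    (F1Graph l).Adj u v ↔ u ≠ v ∧ Nat.dist (pos l u) (pos l v) ≤ 1 := by
  rw [F1Graph, fromRel_adj, Ne, Fin.ext_iff]
  unfold pos Nat.dist
  omega

theorem edist_eq {u v : Fin (l + 6)} (huv : u ≠ v) :
    (F1Graph l).edist u v = max (Nat.dist (pos l u) (pos l v)) 1 := by
  refine edist_eq_max_dist (p := fun u : Fin (l + 6) => pos l u) (fun _ _ => adj_iff)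
    (fun a b h => ⟨⟨pos l a + 1, ?_⟩, ?_⟩) huv
  · have := b.isLt
    unfold pos at *
    omega
  · simp only [pos] at *
    omega

def Packs (l : ℕ) (C : ℕ → ℕ) (i j : ℕ) : Prop :=
  C i = C j → C i < max (Nat.dist (pos l i) (pos l j)) 1

def IsPacking (l k : ℕ) (C : ℕ → ℕ) : Prop :=
  (∀ i < l + 6, 1 ≤ C i ∧ C i ≤ k) ∧ ∀ i j, i < l + 6 → j < l + 6 → i ≠ j → Packs l C i j

theorem packs_iff {u v : Fin (l + 6)} (huv : u ≠ v) :
    Packs l C u v ↔ (C u = C v → (C u : ℕ∞) < (F1Graph l).edist u v) := by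
  rw [edist_eq huv]
  unfold Packs
  norm_cast

theorem isPackingColoring_iff :
    IsPackingColoring (F1Graph l) k (fun u => C u) ↔ IsPacking l k C := by
  constructor
  · rintro ⟨hbound, hsep⟩
    refine ⟨fun i hi => hbound ⟨i, hi⟩, fun i j hi hj hij => ?_⟩
    have huv : (⟨i, hi⟩ : Fin (l + 6)) ≠ ⟨j, hj⟩ := Fin.ne_of_val_ne hij
    exact (packs_iff huv).2 (hsep _ _ huv)
  · rintro ⟨hbound, hsep⟩
    exact ⟨fun u => hbound u u.isLt, fun u v huv =>
      (packs_iff huv).1 (hsep u v u.isLt v.isLt (Fin.val_ne_of_ne huv))⟩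

theorem packs_congr {C' : ℕ → ℕ} {i j : ℕ} (hi : C' i = C i) (hj : C' j = C j) :
    Packs l C' i j ↔ Packs l C i j := by
  unfold Packs
  rw [hi, hj]

theorem packs_mirror {i j : ℕ} (hi : i < l + 6) (hj : j < l + 6)
    (h : Packs l C (l + 5 - i) (l + 5 - j)) : Packs l (fun x => C (l + 5 - x)) i j := by
  intro heq
  have := h heq
  simp only [pos, Nat.dist] at this ⊢
  omega

theorem IsPacking.mirror (hC : IsPacking l k C) : IsPacking l k (fun i => C (l + 5 - i)) :=
  ⟨fun i hi => hC.1 _ (by omega), fun i j hi hj hij =>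
    packs_mirror hi hj (hC.2 _ _ (by omega) (by omega) (by omega))⟩

def pattern (j : ℕ) : ℕ := if j % 2 = 1 then 1 else if j % 4 = 2 then 3 else 2

theorem pattern_mem (j : ℕ) : 1 ≤ pattern j ∧ pattern j ≤ 3 := by
  unfold pattern
  split_ifs <;> omega

theorem packs_pattern {i j : ℕ} (hij : i ≠ j)
    (htwins : ¬ (l + 4 ≤ i ∧ l + 4 ≤ j)) : Packs l (fun i => pattern (min i (l + 4))) i j := by
  simp only [Packs, pattern, pos, Nat.dist]
  split_ifs <;> omega

theorem isPackingColoring_four :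
    IsPackingColoring (F1Graph l) 4
      (fun u => if (u : ℕ) = l + 5 then 4 else pattern (min u (l + 4))) := by
  refine (isPackingColoring_iff
    (C := fun i => if i = l + 5 then 4 else pattern (min i (l + 4)))).2
    ⟨fun i _ => ?_, fun i j hi hj hij heq => ?_⟩
  · have := pattern_mem (min i (l + 4))
    dsimp only
    split_ifs <;> omega
  · have hi' := pattern_mem (min i (l + 4))
    have hj' := pattern_mem (min j (l + 4))
    by_cases hi5 : i = l + 5 <;> by_cases hj5 : j = l + 5 <;>
      simp only [hi5, hj5, if_true, if_false] at heq ⊢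
    · omega
    · omega
    · omega
    · exact packs_pattern hij (by omega) heq

theorem IsPacking.eq_three_one_two (hC : IsPacking l 3 C) : C 2 = 3 ∧ C 3 = 1 ∧ C 4 = 2 := by
  -- `C 2 = 1` leaves no color for `3`; `C 2 = 2` forces `C 3 = 1` and leaves no color for `4`.
  have b0 := hC.1 0 (by omega)
  have b1 := hC.1 1 (by omega)
  have b2 := hC.1 2 (by omega)
  have b3 := hC.1 3 (by omega)
  have b4 := hC.1 4 (by omega)
  have h01 := hC.2 0 1 (by omega) (by omega) (by omega)
  have h02 := hC.2 0 2 (by omega) (by omega) (by omega)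
  have h03 := hC.2 0 3 (by omega) (by omega) (by omega)
  have h04 := hC.2 0 4 (by omega) (by omega) (by omega)
  have h12 := hC.2 1 2 (by omega) (by omega) (by omega)
  have h13 := hC.2 1 3 (by omega) (by omega) (by omega)
  have h14 := hC.2 1 4 (by omega) (by omega) (by omega)
  have h23 := hC.2 2 3 (by omega) (by omega) (by omega)
  have h24 := hC.2 2 4 (by omega) (by omega) (by omega)
  have h34 := hC.2 3 4 (by omega) (by omega) (by omega)
  simp only [Packs, pos, Nat.dist] at *
  refine ⟨?_, ?_, ?_⟩ <;> omega

theorem IsPacking.not_three_two (hC : IsPacking l 3 C) {i : ℕ} (hi : i ≤ l + 2)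
    (h0 : C i = 3) (h1 : C (i + 1) = 2) : False := by
  -- `i + 2` must get color `1`, and then `i + 3` gets none.
  have b2 := hC.1 (i + 2) (by omega)
  have b3 := hC.1 (i + 3) (by omega)
  have h02 := hC.2 i (i + 2) (by omega) (by omega) (by omega)
  have h12 := hC.2 (i + 1) (i + 2) (by omega) (by omega) (by omega)
  have h03 := hC.2 i (i + 3) (by omega) (by omega) (by omega)
  have h13 := hC.2 (i + 1) (i + 3) (by omega) (by omega) (by omega)
  have h23 := hC.2 (i + 2) (i + 3) (by omega) (by omega) (by omega)
  simp only [Packs, pos, Nat.dist] at *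
  omega

theorem IsPacking.eq_pattern_add_three (hC : IsPacking l 3 C) {i : ℕ} (hi : i ≤ l)
    (h0 : C i = pattern i) (h1 : C (i + 1) = pattern (i + 1))
    (h2 : C (i + 2) = pattern (i + 2)) : C (i + 3) = pattern (i + 3) := by
  have b3 := hC.1 (i + 3) (by omega)
  have h03 := hC.2 i (i + 3) (by omega) (by omega) (by omega)
  have h13 := hC.2 (i + 1) (i + 3) (by omega) (by omega) (by omega)
  have h23 := hC.2 (i + 2) (i + 3) (by omega) (by omega) (by omega)
  -- after a `3`, the three predecessors alone would still allow a `2`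
  have h32 : ¬ (C (i + 2) = 3 ∧ C (i + 3) = 2) := fun h => hC.not_three_two (by omega) h.1 h.2
  simp only [Packs, pos, Nat.dist] at h03 h13 h23
  unfold pattern at h0 h1 h2 ⊢
  split_ifs at h0 h1 h2 ⊢ <;> omega

theorem IsPacking.eq_pattern (hC : IsPacking l 3 C) {i : ℕ} (hi : 2 ≤ i) (hil : i ≤ l + 3) :
    C i = pattern i := by
  induction i using Nat.strong_induction_on with
  | _ i ih =>
    obtain ⟨c2, c3, c4⟩ := hC.eq_three_one_two
    obtain rfl | rfl | rfl | hi5 : i = 2 ∨ i = 3 ∨ i = 4 ∨ 5 ≤ i := by omega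
    · exact c2
    · exact c3
    · exact c4
    obtain ⟨j, rfl⟩ : ∃ j, i = j + 3 := ⟨i - 3, by omega⟩
    exact hC.eq_pattern_add_three (by omega) (ih j (by omega) (by omega) (by omega))
      (ih (j + 1) (by omega) (by omega) (by omega)) (ih (j + 2) (by omega) (by omega) (by omega))

theorem not_isPacking_three (hl : l % 4 ≠ 3) : ¬ IsPacking l 3 C := by
  intro hC
  have hend : C (l + 3) = 3 := by simpa using hC.mirror.eq_three_one_two.1
  have := hC.eq_pattern (i := l + 3) (by omega) le_rfl
  rw [hend] at this
  unfold pattern at this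
  split_ifs at this <;> omega

theorem not_exists_isPackingColoring_three (hl : l % 4 ≠ 3) :
    ¬ ∃ c, IsPackingColoring (F1Graph l) 3 c := by
  rintro ⟨c, hc⟩
  exact not_isPacking_three hl
    ((isPackingColoring_iff (C := fun i => if h : i < l + 6 then c ⟨i, h⟩ else 0)).1
      (by simpa using hc))

theorem isPackingColoring_induce_compl {v : Fin (l + 6)} (hbound : ∀ i, 1 ≤ C i ∧ C i ≤ 3)
    (hsep : ∀ i j, i < l + 6 → j < l + 6 → i ≠ v → j ≠ v → i ≠ j →
      Packs l C i j ∨ (pos l i < pos l v ∧ pos l v < pos l j) ∨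
        (pos l j < pos l v ∧ pos l v < pos l i)) :
    IsPackingColoring ((F1Graph l).induce {v}ᶜ) 3 (fun u => C u) := by
  refine isPackingColoring_induce (c := fun x : Fin (l + 6) => C x) (fun u _ => hbound u)
    fun u w huw heq => ?_
  have hne : (u : Fin (l + 6)) ≠ w := fun h => huw (Subtype.ext h)
  have hp : ∀ a b : Fin (l + 6), (F1Graph l).Adj a b → Nat.dist (pos l a) (pos l b) ≤ 1 :=
    fun a b h => (adj_iff.1 h).2
  have huniq {a b : ℕ} (ha : pos l a < pos l v) (hb : pos l v < pos l b) (x : Fin (l + 6))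
      (hx : pos l x = pos l v) : x = v := by
    simp only [pos] at ha hb hx
    omega
  rcases hsep u w u.1.isLt w.1.isLt (fun h => u.2 (Fin.ext h)) (fun h => w.2 (Fin.ext h))
    (Fin.val_ne_of_ne hne) with h | h | h
  · exact .inl ((packs_iff hne).1 h heq)
  · exact .inr (not_reachable_induce_compl hp (huniq h.1 h.2) h.1 h.2)
  · exact .inr fun hr => not_reachable_induce_compl hp (huniq h.1 h.2) h.1 h.2 hr.symm

theorem exists_isPackingColoring_three_induce_compl (v : Fin (l + 6)) :
    ∃ c, IsPackingColoring ((F1Graph l).induce {v}ᶜ) 3 c := by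
  set L := fun i => pattern (min i (l + 4))
  set R := fun i => L (l + 5 - i)
  have hR {i j : ℕ} (hi : i < l + 6) (hj : j < l + 6) (hij : i ≠ j) (h : ¬ (i ≤ 1 ∧ j ≤ 1)) :
      Packs l R i j := packs_mirror hi hj (packs_pattern (by omega) (by omega))
  rcases (by omega : (v : ℕ) ≤ 1 ∨ l + 4 ≤ (v : ℕ) ∨ (2 ≤ (v : ℕ) ∧ (v : ℕ) ≤ l + 3))
    with hv | hv | hv
  · exact ⟨_, isPackingColoring_induce_compl (C := R) (fun _ => pattern_mem _)
      fun i j hi hj _ _ hij => .inl (hR hi hj hij (by omega))⟩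
  · exact ⟨_, isPackingColoring_induce_compl (C := L) (fun _ => pattern_mem _)
      fun i j hi hj _ _ hij => .inl (packs_pattern hij (by omega))⟩
  set S := fun i => if i < (v : ℕ) then L i else R i
  refine ⟨_, isPackingColoring_induce_compl (C := S)
    (fun i => by simp only [S]; split_ifs <;> exact pattern_mem _) fun i j hi hj _ _ hij => ?_⟩
  by_cases hi' : i < v <;> by_cases hj' : j < v
  · exact .inl ((packs_congr (C' := S) (C := L) (if_pos hi') (if_pos hj')).2
      (packs_pattern hij (by omega)))
  · exact .inr (.inl (by simp only [pos]; omega))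
  · exact .inr (.inr (by simp only [pos]; omega))
  · exact .inl ((packs_congr (C' := S) (C := R) (if_neg hi') (if_neg hj')).2
      (hR hi hj hij (by omega)))

end F1Graph

theorem F1_fourVertexCritical (l : ℕ) (hl : l % 4 ≠ 3) :
    FourVertexCritical (F1Graph l) := by
  refine ⟨packingChromaticNumber_eq_succ ⟨_, F1Graph.isPackingColoring_four⟩
    (F1Graph.not_exists_isPackingColoring_three hl), fun v => ?_⟩
  obtain ⟨c, hc⟩ := F1Graph.exists_isPackingColoring_three_induce_compl v
  exact (packingChromaticNumber_le hc).trans_lt (by norm_num)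
end
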